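/- Let b ≥ 2 be an integer. There exists a constant c > 0 (depending only on b) such that for all integers n ≥ 1, all generalized Hammersley point sets R_n with discrepancy function D, and all j₁, j₂ ∈ ℕ₀ with j₁ + j₂ ≥ n − 1 and j₁ ≤ n, j₂ ≤ n, all m₁ ∈ {0,…,b^{j₁}−1}, m₂ ∈ {0,…,b^{j₂}−1}, ℓ₁, ℓ₂ ∈ {1,…,b−1}, the Haar coefficient μ_{j,m,ℓ} = ∫_{[0,1)²} D(x)·h_{j₁,m₁,ℓ₁}(x₁)·h_{j₂,m₂,ℓ₂}(x₂) dx satisfies |μ_{j,m,ℓ}| ≤ c·b^{−n−j₁−j₂}; moreover, for each fixed such (j₁,j₂) and (ℓ₁,ℓ₂), the number of pairs (m₁,m₂) for which |μ_{j,m,ℓ}| ≠ b^{−2j₁−2j₂−2}/(|exp(2πiℓ₁/b) − 1|·|exp(2πiℓ₂/b) − 1|) is at most bⁿ. -/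

import Mathlib

open scoped Classical
open Finset MeasureTheory

/-- `bexp b ℓ k = exp(2πiℓk/b)`. -/
noncomputable def bexp (b ℓ k : ℕ) : ℂ :=
  Complex.exp (2 * Real.pi * Complex.I * ℓ * k / b)

/-- The `b`-adic Haar function `h_{j,m,ℓ}` on `[0,1)`. -/
noncomputable def haar (b j m ℓ : ℕ) (x : ℝ) : ℂ :=
  ∑ k ∈ Finset.range b,
    if ((b:ℝ)^(j+1))⁻¹ * ((b:ℝ)*m + k) ≤ x ∧ x < ((b:ℝ)^(j+1))⁻¹ * ((b:ℝ)*m + k + 1)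
    then bexp b ℓ k else 0

/-- First coordinate of the generalized Hammersley point: `z₁ = tₙ/b + ⋯ + t₁/bⁿ`. -/
noncomputable def z1 (b n : ℕ) (t : Fin n → Fin b) : ℝ :=
  ∑ i : Fin n, ((t i : ℕ) : ℝ) / (b:ℝ) ^ (n - (i:ℕ))

/-- Second coordinate: `z₂ = s₁(t₁)/b + s₂(t₂)/b² + ⋯ + sₙ(tₙ)/bⁿ`. -/
noncomputable def z2 (b n : ℕ) (s : Fin n → ℕ → ℕ) (t : Fin n → Fin b) : ℝ :=
  ∑ i : Fin n, ((s i (t i : ℕ) : ℕ) : ℝ) / (b:ℝ) ^ ((i:ℕ) + 1)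

/-- Each `s i` is either the identity or the reflection `t ↦ b−1−t` on digits. -/
def IsDigitMaps (b n : ℕ) (s : Fin n → ℕ → ℕ) : Prop :=
  ∀ i, (∀ k, k < b → s i k = k) ∨ (∀ k, k < b → s i k = b - 1 - k)

/-- The discrepancy function of the generalized Hammersley point set. -/
noncomputable def disc (b n : ℕ) (s : Fin n → ℕ → ℕ) (x₁ x₂ : ℝ) : ℝ :=
  (b:ℝ) ^ (-(n:ℤ)) *
      ∑ t : Fin n → Fin b,
        (if z1 b n t < x₁ then (1:ℝ) else 0) * (if z2 b n s t < x₂ then (1:ℝ) else 0)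
    - x₁ * x₂

/-- The `b`-adic Haar coefficient `μ_{j,m,ℓ}` of the discrepancy function. -/
noncomputable def mu (b n : ℕ) (s : Fin n → ℕ → ℕ) (j₁ j₂ m₁ m₂ ℓ₁ ℓ₂ : ℕ) : ℂ :=
  ∫ x₁ in Set.Ico (0:ℝ) 1, ∫ x₂ in Set.Ico (0:ℝ) 1,
    ((disc b n s x₁ x₂ : ℝ) : ℂ) * haar b j₁ m₁ ℓ₁ x₁ * haar b j₂ m₂ ℓ₂ x₂

/-!
Expanding the discrepancy function, `μ = b⁻ⁿ ∑ₜ A₁(z₁(t)) A₂(z₂(t)) - W₁ W₂`, where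
`A(p) = ∫_p^1 h` and `W = ∫_0^1 x h(x) dx`. Since `h_{j,m,ℓ}` has mean zero and lives on
`I_{j,m}`, `A(p)` vanishes unless `p ∈ I_{j,m}`, and `|A| ≤ b^{-j}`; the moment is explicit,
`|W| = b^{-2j-1} / |exp(2πiℓ/b) - 1|`. A point `z(t)` lies in the box `I_{j₁,m₁} × I_{j₂,m₂}`
only if the digits `tᵢ` with `i < j₂` (read off `z₂`) and with `i ≥ n - j₁` (read off `z₁`) are
prescribed, which leaves at most one free digit when `j₁ + j₂ ≥ n - 1`. Hence at most `b` points
contribute to each coefficient, and for every box containing no point, i.e. for all but at most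
`bⁿ` boxes, `μ = -W₁ W₂`.
-/

theorem sum_range_pow_eq_zero_of_pow_eq_one {K : Type*} [Field K] {x : K} {N : ℕ}
    (hxN : x ^ N = 1) (hx : x ≠ 1) : ∑ k ∈ range N, x ^ k = 0 := by
  rw [geom_sum_eq hx, hxN, sub_self, zero_div]

theorem sub_one_mul_sum_range_mul_pow {R : Type*} [CommRing R] (x : R) (N : ℕ) :
    (x - 1) * ∑ k ∈ range N, (k : R) * x ^ k = N * x ^ N - x ^ N - ∑ k ∈ range N, x ^ k + 1 := by
  induction N with
  | zero => simp
  | succ N ih =>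
    rw [sum_range_succ, sum_range_succ (fun k => x ^ k), mul_add, ih]
    push_cast
    ring

theorem sum_range_mul_pow_of_pow_eq_one {K : Type*} [Field K] {x : K} {N : ℕ}
    (hxN : x ^ N = 1) (hx : x ≠ 1) : ∑ k ∈ range N, (k : K) * x ^ k = N / (x - 1) := by
  rw [eq_div_iff (sub_ne_zero.2 hx), mul_comm, sub_one_mul_sum_range_mul_pow,
    sum_range_pow_eq_zero_of_pow_eq_one hxN hx, hxN]
  ring

namespace bexp

variable {b ℓ : ℕ}

theorem eq_pow (b ℓ k : ℕ) : bexp b ℓ k = bexp b ℓ 1 ^ k := by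
  rw [bexp, bexp, ← Complex.exp_nat_mul]
  push_cast
  ring_nf

theorem norm_eq_one (b ℓ k : ℕ) : ‖bexp b ℓ k‖ = 1 := by
  rw [bexp, show (2 * Real.pi * Complex.I * ℓ * k / b : ℂ)
      = ((2 * Real.pi * ℓ * k / b : ℝ) : ℂ) * Complex.I by push_cast; ring,
    Complex.norm_exp_ofReal_mul_I]

theorem one_eq_pow (b ℓ : ℕ) :
    bexp b ℓ 1 = Complex.exp (2 * Real.pi * Complex.I / b) ^ ℓ := by
  rw [bexp, ← Complex.exp_nat_mul]
  congr 1
  ring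

theorem one_pow_self (hb : b ≠ 0) : bexp b ℓ 1 ^ b = 1 := by
  rw [one_eq_pow, pow_right_comm, (Complex.isPrimitiveRoot_exp b hb).pow_eq_one,
    one_pow]

theorem one_ne_one (hℓ : 0 < ℓ) (hℓb : ℓ < b) : bexp b ℓ 1 ≠ 1 := by
  rw [one_eq_pow]
  exact (Complex.isPrimitiveRoot_exp b (by omega)).pow_ne_one_of_pos_of_lt hℓ.ne' hℓb

theorem sum_eq_zero (hℓ : 0 < ℓ) (hℓb : ℓ < b) : ∑ k ∈ range b, bexp b ℓ k = 0 := by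
  rw [sum_congr rfl fun k _ => eq_pow b ℓ k]
  exact sum_range_pow_eq_zero_of_pow_eq_one (one_pow_self (by omega)) (one_ne_one hℓ hℓb)

theorem sum_mul_eq (hℓ : 0 < ℓ) (hℓb : ℓ < b) :
    ∑ k ∈ range b, (k : ℂ) * bexp b ℓ k = b / (bexp b ℓ 1 - 1) := by
  rw [sum_congr rfl fun k _ => by rw [eq_pow b ℓ k]]
  exact sum_range_mul_pow_of_pow_eq_one (one_pow_self (by omega)) (one_ne_one hℓ hℓb)

end bexp

def adicInterval (b j m : ℕ) : Set ℝ :=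
  Set.Ico (((b : ℝ) ^ j)⁻¹ * m) (((b : ℝ) ^ j)⁻¹ * (m + 1))

section adicInterval

variable {b j m : ℕ}

theorem measurableSet_adicInterval : MeasurableSet (adicInterval b j m) := measurableSet_Ico

theorem adicInterval_child_subset (hb : 0 < b) {k : ℕ} (hk : k < b) :
    adicInterval b (j + 1) (b * m + k) ⊆ adicInterval b j m := by
  have hbR : (0 : ℝ) < b := by exact_mod_cast hb
  have hkR : (k : ℝ) + 1 ≤ b := by exact_mod_cast hk
  intro x ⟨hx₁, hx₂⟩
  rw [pow_succ, mul_inv, Nat.cast_add, Nat.cast_mul] at hx₁ hx₂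
  constructor
  · refine le_trans (le_of_eq_of_le ?_ (mul_le_mul_of_nonneg_left
      (le_add_of_nonneg_right k.cast_nonneg) (by positivity))) hx₁
    field_simp
  · refine hx₂.trans_le (le_of_le_of_eq (mul_le_mul_of_nonneg_left
      (by linarith : (b : ℝ) * m + k + 1 ≤ b * (m + 1)) (by positivity)) ?_)
    field_simp

theorem adicInterval_subset_Ico (hb : 0 < b) (hm : m < b ^ j) :
    adicInterval b j m ⊆ Set.Ico 0 1 := by
  have hpow : (0 : ℝ) < (b : ℝ) ^ j := by positivity
  have hmR : (m : ℝ) + 1 ≤ (b : ℝ) ^ j := by exact_mod_cast hm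
  refine Set.Ico_subset_Ico (by positivity) ?_
  rwa [inv_mul_le_iff₀ hpow, mul_one]

theorem volume_real_adicInterval : volume.real (adicInterval b j m) = ((b : ℝ) ^ j)⁻¹ := by
  rw [adicInterval, Real.volume_real_Ico_of_le (by gcongr; simp)]
  ring

end adicInterval

section haar

variable {b j m ℓ : ℕ}

theorem haar_eq_sum_indicator (b j m ℓ : ℕ) :
    haar b j m ℓ = fun x => ∑ k ∈ range b,
      (adicInterval b (j + 1) (b * m + k)).indicator (fun _ => bexp b ℓ k) x := by
  funext x
  refine sum_congr rfl fun k _ => ?_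
  simp only [Set.indicator_apply, adicInterval, Set.mem_Ico]
  push_cast
  rfl

theorem haar_eq_zero_of_notMem (hb : 0 < b) {x : ℝ} (hx : x ∉ adicInterval b j m) :
    haar b j m ℓ x = 0 := by
  rw [haar_eq_sum_indicator]
  exact sum_eq_zero fun k hk =>
    Set.indicator_of_notMem (fun h => hx (adicInterval_child_subset hb (mem_range.1 hk) h)) _

theorem integrable_haar (μ : Measure ℝ) [IsFiniteMeasure μ] : Integrable (haar b j m ℓ) μ := by
  rw [haar_eq_sum_indicator]
  exact integrable_finsetSum _ fun k _ =>
    (integrable_const _).indicator measurableSet_adicInterval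

theorem setIntegral_mul_haar (hb : 0 < b) (hm : m < b ^ j) {f : ℝ → ℂ}
    (hf : IntegrableOn f (Set.Ico 0 1)) :
    ∫ x in Set.Ico 0 1, f x * haar b j m ℓ x
      = ∑ k ∈ range b, (∫ x in adicInterval b (j + 1) (b * m + k), f x) * bexp b ℓ k := by
  have hsub : ∀ k ∈ range b, adicInterval b (j + 1) (b * m + k) ⊆ Set.Ico 0 1 := fun k hk =>
    (adicInterval_child_subset hb (mem_range.1 hk)).trans (adicInterval_subset_Ico hb hm)
  have hpiece : ∀ k, (fun x => f x * (adicInterval b (j + 1) (b * m + k)).indicator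
      (fun _ => bexp b ℓ k) x) = (adicInterval b (j + 1) (b * m + k)).indicator
      (fun x => f x * bexp b ℓ k) := fun k => by
    funext x
    simp only [Set.indicator_apply]
    split_ifs <;> simp
  simp_rw [haar_eq_sum_indicator, mul_sum]
  rw [integral_finsetSum _ fun k _ => by
    rw [hpiece]
    exact (hf.mul_const _).indicator measurableSet_adicInterval]
  refine sum_congr rfl fun k hk => ?_
  rw [hpiece, integral_indicator measurableSet_adicInterval,
    Measure.restrict_restrict measurableSet_adicInterval,
    Set.inter_eq_self_of_subset_left (hsub k hk), integral_mul_const]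

theorem norm_setIntegral_mul_haar_le (hb : 0 < b) (hm : m < b ^ j) {f : ℝ → ℂ}
    (hf : IntegrableOn f (Set.Ico 0 1)) {C : ℝ} (hC : ∀ x, ‖f x‖ ≤ C) :
    ‖∫ x in Set.Ico 0 1, f x * haar b j m ℓ x‖ ≤ C * ((b : ℝ) ^ j)⁻¹ := by
  rw [setIntegral_mul_haar hb hm hf]
  calc _ ≤ ∑ k ∈ range b, C * ((b : ℝ) ^ (j + 1))⁻¹ := by
        refine (norm_sum_le _ _).trans (sum_le_sum fun k _ => ?_)
        rw [norm_mul, bexp.norm_eq_one, mul_one, ← volume_real_adicInterval (m := b * m + k)]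
        exact norm_setIntegral_le_of_norm_le_const measure_Ico_lt_top fun x _ => hC x
    _ = C * ((b : ℝ) ^ j)⁻¹ := by
        have hbR : (b : ℝ) ≠ 0 := by exact_mod_cast hb.ne'
        rw [sum_const, card_range, nsmul_eq_mul, pow_succ]
        field_simp

theorem setIntegral_haar (hm : m < b ^ j) (hℓ : 0 < ℓ) (hℓb : ℓ < b) :
    ∫ x in Set.Ico 0 1, haar b j m ℓ x = 0 := by
  have h := setIntegral_mul_haar (ℓ := ℓ) (by omega) hm (integrableOn_const (C := (1 : ℂ))
    measure_Ico_lt_top.ne)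
  simp only [one_mul, setIntegral_const, volume_real_adicInterval, Complex.real_smul] at h
  rw [h, ← mul_sum, bexp.sum_eq_zero hℓ hℓb, mul_zero]

end haar

noncomputable def haarTail (b j m ℓ : ℕ) (p : ℝ) : ℂ :=
  ∫ x in Set.Ico 0 1, (if p < x then 1 else 0) * haar b j m ℓ x

noncomputable def haarMoment (b j m ℓ : ℕ) : ℂ :=
  ∫ x in Set.Ico (0 : ℝ) 1, (x : ℂ) * haar b j m ℓ x

theorem integrable_ite_lt (μ : Measure ℝ) [IsFiniteMeasure μ] (p : ℝ) :
    Integrable (fun x : ℝ => if p < x then (1 : ℂ) else 0) μ :=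
  .of_bound (measurable_const.ite measurableSet_Ioi measurable_const).aestronglyMeasurable 1
    (ae_of_all _ fun x => by split_ifs <;> simp)

section haarTail

variable {b j m ℓ : ℕ}

theorem norm_haarTail_le (hb : 0 < b) (hm : m < b ^ j) (p : ℝ) :
    ‖haarTail b j m ℓ p‖ ≤ ((b : ℝ) ^ j)⁻¹ := by
  have h := norm_setIntegral_mul_haar_le (ℓ := ℓ) hb hm (integrable_ite_lt _ p) (C := 1)
    fun x => by split_ifs <;> simp
  rwa [one_mul] at h

theorem haarTail_eq_zero_of_lt (hm : m < b ^ j) (hℓ : 0 < ℓ) (hℓb : ℓ < b) {p : ℝ}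
    (hp : p < ((b : ℝ) ^ j)⁻¹ * m) : haarTail b j m ℓ p = 0 := by
  have h : ∀ x, (if p < x then 1 else 0) * haar b j m ℓ x = haar b j m ℓ x := fun x => by
    split_ifs with hx
    · exact one_mul _
    · rw [haar_eq_zero_of_notMem (by omega) fun h => hx (hp.trans_le h.1), mul_zero]
  simp_rw [haarTail, h]
  exact setIntegral_haar hm hℓ hℓb

theorem haarTail_eq_zero_of_le (hb : 0 < b) {p : ℝ} (hp : ((b : ℝ) ^ j)⁻¹ * (m + 1) ≤ p) :
    haarTail b j m ℓ p = 0 := by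
  have h : ∀ x, (if p < x then 1 else 0) * haar b j m ℓ x = 0 := fun x => by
    split_ifs with hx
    · rw [haar_eq_zero_of_notMem hb fun h => (hp.trans_lt hx).not_ge h.2.le, mul_zero]
    · exact zero_mul _
  simp_rw [haarTail, h, integral_zero]

theorem haarTail_eq_zero_of_floor_ne (hm : m < b ^ j) (hℓ : 0 < ℓ) (hℓb : ℓ < b) {p : ℝ}
    (hp : 0 ≤ p) (hpm : ⌊(b : ℝ) ^ j * p⌋₊ ≠ m) : haarTail b j m ℓ p = 0 := by
  have hpow : (0 : ℝ) < (b : ℝ) ^ j := pow_pos (by exact_mod_cast (by omega : 0 < b)) j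
  rcases lt_or_ge ((b : ℝ) ^ j * p) m with hlt | hge
  · refine haarTail_eq_zero_of_lt hm hℓ hℓb ?_
    rwa [inv_mul_eq_div, lt_div_iff₀' hpow]
  · refine haarTail_eq_zero_of_le (by omega) ?_
    rw [inv_mul_le_iff₀ hpow]
    by_contra! hlt
    exact hpm ((Nat.floor_eq_iff (by positivity)).2 ⟨hge, hlt⟩)

end haarTail

theorem setIntegral_id_adicInterval (b j m : ℕ) :
    ∫ x in adicInterval b j m, (x : ℂ) = (((b : ℝ) ^ j)⁻¹ ^ 2 * (m + 1 / 2) : ℝ) := by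
  rw [integral_complex_ofReal, adicInterval, integral_Ico_eq_integral_Ioc,
    ← intervalIntegral.integral_of_le (by gcongr; simp), integral_id]
  ring_nf

theorem haarMoment_eq {b j m ℓ : ℕ} (hm : m < b ^ j) (hℓ : 0 < ℓ) (hℓb : ℓ < b) :
    haarMoment b j m ℓ = ((b : ℂ) ^ (j + 1))⁻¹ ^ 2 * (b / (bexp b ℓ 1 - 1)) := by
  rw [haarMoment, setIntegral_mul_haar (by omega) hm
    (Complex.continuous_ofReal.integrableOn_Icc.mono_set Set.Ico_subset_Icc_self)]
  simp_rw [setIntegral_id_adicInterval]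
  push_cast
  rw [sum_congr rfl fun k _ => show ((b : ℂ) ^ (j + 1))⁻¹ ^ 2 * (b * m + k + 1 / 2) * bexp b ℓ k
      = ((b : ℂ) ^ (j + 1))⁻¹ ^ 2 * ((b * m + 1 / 2) * bexp b ℓ k + k * bexp b ℓ k) by ring,
    ← mul_sum, sum_add_distrib, ← mul_sum, bexp.sum_eq_zero hℓ hℓb, bexp.sum_mul_eq hℓ hℓb,
    mul_zero, zero_add]

theorem norm_haarMoment {b j m ℓ : ℕ} (hm : m < b ^ j) (hℓ : 0 < ℓ) (hℓb : ℓ < b) :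
    ‖haarMoment b j m ℓ‖ = (b : ℝ) ^ (-2 * (j : ℤ) - 1) / ‖bexp b ℓ 1 - 1‖ := by
  have hb : (b : ℝ) ≠ 0 := by exact_mod_cast (by omega : b ≠ 0)
  rw [haarMoment_eq hm hℓ hℓb, norm_mul, norm_div, norm_pow, norm_inv, norm_pow,
    Complex.norm_natCast, show -2 * (j : ℤ) - 1 = 1 - 2 * ((j + 1 : ℕ) : ℤ) by push_cast; ring,
    zpow_sub₀ hb, zpow_one, zpow_mul, zpow_natCast]
  field_simp
  ring

theorem integral_integral_sum_mul_sub_mul {α β ι 𝕜 : Type*} [MeasurableSpace α]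
    [MeasurableSpace β] [RCLike 𝕜] {μ : Measure α} {ν : Measure β} (s : Finset ι)
    {f : ι → α → 𝕜} {g : ι → β → 𝕜} {u : α → 𝕜} {v : β → 𝕜}
    (hf : ∀ i ∈ s, Integrable (f i) μ) (hg : ∀ i ∈ s, Integrable (g i) ν)
    (hu : Integrable u μ) (hv : Integrable v ν) :
    ∫ x, ∫ y, (∑ i ∈ s, f i x * g i y - u x * v y) ∂ν ∂μ
      = ∑ i ∈ s, (∫ x, f i x ∂μ) * (∫ y, g i y ∂ν) - (∫ x, u x ∂μ) * ∫ y, v y ∂ν := by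
  have inner : ∀ x, ∫ y, (∑ i ∈ s, f i x * g i y - u x * v y) ∂ν
      = ∑ i ∈ s, f i x * (∫ y, g i y ∂ν) - u x * ∫ y, v y ∂ν := fun x => by
    rw [integral_sub (integrable_finsetSum _ fun i hi => (hg i hi).const_mul _) (hv.const_mul _),
      integral_finsetSum _ fun i hi => (hg i hi).const_mul _]
    simp_rw [integral_const_mul]
  simp_rw [inner]
  rw [integral_sub (integrable_finsetSum _ fun i hi => (hf i hi).mul_const _) (hu.mul_const _),
    integral_finsetSum _ fun i hi => (hf i hi).mul_const _]
  simp_rw [integral_mul_const]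

theorem integrable_mul_haar {b j m ℓ : ℕ} {μ : Measure ℝ} [IsFiniteMeasure μ] {f : ℝ → ℂ}
    (hf : AEStronglyMeasurable f μ) {C : ℝ} (hC : ∀ᵐ x ∂μ, ‖f x‖ ≤ C) :
    Integrable (fun x => f x * haar b j m ℓ x) μ :=
  (integrable_haar μ).bdd_mul hf hC

theorem integrable_ite_lt_mul_haar {b j m ℓ : ℕ} (μ : Measure ℝ) [IsFiniteMeasure μ] (p : ℝ) :
    Integrable (fun x => (if p < x then (1 : ℂ) else 0) * haar b j m ℓ x) μ :=
  integrable_mul_haar (integrable_ite_lt μ p).aestronglyMeasurable (C := 1)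
    (ae_of_all _ fun x => by split_ifs <;> simp)

theorem integrable_id_mul_haar (b j m ℓ : ℕ) :
    Integrable (fun x : ℝ => (x : ℂ) * haar b j m ℓ x) (volume.restrict (Set.Ico 0 1)) :=
  integrable_mul_haar Complex.continuous_ofReal.aestronglyMeasurable (C := 1)
    ((ae_restrict_iff' measurableSet_Ico).2 (ae_of_all _ fun x hx => by
      rw [Complex.norm_real, Real.norm_of_nonneg hx.1]
      exact hx.2.le))

theorem mu_eq_sum_haarTail_mul_sub_haarMoment_mul (b n : ℕ) (s : Fin n → ℕ → ℕ)
    (j₁ j₂ m₁ m₂ ℓ₁ ℓ₂ : ℕ) :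
    mu b n s j₁ j₂ m₁ m₂ ℓ₁ ℓ₂
      = (b : ℂ) ^ (-(n : ℤ)) * ∑ t : Fin n → Fin b,
          haarTail b j₁ m₁ ℓ₁ (z1 b n t) * haarTail b j₂ m₂ ℓ₂ (z2 b n s t)
        - haarMoment b j₁ m₁ ℓ₁ * haarMoment b j₂ m₂ ℓ₂ := by
  have hsplit : ∀ x₁ x₂ : ℝ,
      ((disc b n s x₁ x₂ : ℝ) : ℂ) * haar b j₁ m₁ ℓ₁ x₁ * haar b j₂ m₂ ℓ₂ x₂
        = ∑ t : Fin n → Fin b,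
            ((b : ℂ) ^ (-(n : ℤ)) * ((if z1 b n t < x₁ then 1 else 0) * haar b j₁ m₁ ℓ₁ x₁))
              * ((if z2 b n s t < x₂ then 1 else 0) * haar b j₂ m₂ ℓ₂ x₂)
          - ((x₁ : ℂ) * haar b j₁ m₁ ℓ₁ x₁) * ((x₂ : ℂ) * haar b j₂ m₂ ℓ₂ x₂) := fun x₁ x₂ => by
    simp only [disc]
    push_cast [apply_ite Complex.ofReal]
    rw [sub_mul, sub_mul, mul_sum, sum_mul, sum_mul]
    congr 1
    · exact sum_congr rfl fun t _ => by ring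
    · ring
  simp_rw [mu, hsplit]
  rw [integral_integral_sum_mul_sub_mul _
    (fun t _ => (integrable_ite_lt_mul_haar _ _).const_mul _)
    (fun t _ => integrable_ite_lt_mul_haar _ _)
    (integrable_id_mul_haar _ _ _ _) (integrable_id_mul_haar _ _ _ _), mul_sum]
  simp_rw [integral_const_mul, mul_assoc]
  rfl

theorem card_le_pow_card_of_eqOn_compl {ι α : Type*} [Fintype ι] [Fintype α] [DecidableEq ι]
    {S : Finset (ι → α)} (M : Finset ι) (h : ∀ t ∈ S, ∀ t' ∈ S, Set.EqOn t t' (↑M)ᶜ) :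
    #S ≤ Fintype.card α ^ #M := by
  calc #S ≤ #(univ : Finset (M → α)) :=
        card_le_card_of_injOn (fun t i => t i) (fun _ _ => mem_coe.2 (mem_univ _))
          fun t ht t' ht' htt' => funext fun i => by
            by_cases hi : i ∈ M
            · exact congrFun htt' ⟨i, hi⟩
            · exact h t ht t' ht' hi
    _ = Fintype.card α ^ #M := by simp

/-- The point of `[0,1)` with base-`b` digits `u`, least significant first: `∑ᵢ uᵢ bⁱ / bⁿ`. -/
noncomputable def digitPoint {b n : ℕ} (u : Fin n → Fin b) : ℝ :=
  (finFunctionFinEquiv u : ℕ) / (b : ℝ) ^ n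

section digitPoint

variable {b n j : ℕ}

theorem floor_pow_mul_digitPoint (hb : 0 < b) (hj : j ≤ n) (u : Fin n → Fin b) :
    ⌊(b : ℝ) ^ j * digitPoint u⌋₊ = (finFunctionFinEquiv u : ℕ) / b ^ (n - j) := by
  have hbR : (b : ℝ) ≠ 0 := by exact_mod_cast hb.ne'
  have hpow : (b : ℝ) ^ n = b ^ (n - j) * b ^ j := by rw [← pow_add, Nat.sub_add_cancel hj]
  rw [← Nat.floor_div_eq_div (K := ℝ), digitPoint, Nat.cast_pow, hpow]
  field_simp

theorem finFunctionFinEquiv_div_pow_mod (u : Fin n → Fin b) (i : Fin n) :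
    (finFunctionFinEquiv u : ℕ) / b ^ (i : ℕ) % b = u i := by
  rw [← finFunctionFinEquiv_symm_apply_val, Equiv.symm_apply_apply]

theorem eq_of_floor_pow_mul_digitPoint_eq (hb : 0 < b) (hj : j ≤ n) {u u' : Fin n → Fin b}
    (h : ⌊(b : ℝ) ^ j * digitPoint u⌋₊ = ⌊(b : ℝ) ^ j * digitPoint u'⌋₊) {i : Fin n}
    (hi : n ≤ j + i) : u i = u' i := by
  rw [floor_pow_mul_digitPoint hb hj, floor_pow_mul_digitPoint hb hj] at h
  ext
  rw [← finFunctionFinEquiv_div_pow_mod, ← finFunctionFinEquiv_div_pow_mod,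
    show (i : ℕ) = (n - j) + (i - (n - j)) by omega, pow_add, ← Nat.div_div_eq_div_mul,
    ← Nat.div_div_eq_div_mul, h]

end digitPoint

theorem IsDigitMaps.lt {b n : ℕ} {s : Fin n → ℕ → ℕ} (hs : IsDigitMaps b n s) (i : Fin n)
    {k : ℕ} (hk : k < b) : s i k < b := by
  rcases hs i with h | h <;> rw [h k hk] <;> omega

theorem IsDigitMaps.injOn {b n : ℕ} {s : Fin n → ℕ → ℕ} (hs : IsDigitMaps b n s) (i : Fin n)
    {k k' : ℕ} (hk : k < b) (hk' : k' < b) (h : s i k = s i k') : k = k' := by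
  rcases hs i with hi | hi <;> rw [hi k hk, hi k' hk'] at h <;> omega

section hammersley

variable {b n j : ℕ}

theorem z1_eq_digitPoint (hb : 0 < b) (t : Fin n → Fin b) : z1 b n t = digitPoint t := by
  have hbR : (b : ℝ) ≠ 0 := by exact_mod_cast hb.ne'
  rw [z1, digitPoint, finFunctionFinEquiv_apply, Nat.cast_sum, sum_div]
  refine sum_congr rfl fun i _ => ?_
  have hpow : (b : ℝ) ^ n = b ^ (n - i) * b ^ (i : ℕ) := by
    rw [← pow_add, Nat.sub_add_cancel i.is_lt.le]
  rw [Nat.cast_mul, Nat.cast_pow, hpow]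
  field_simp

theorem exists_z2_eq_digitPoint (hb : 0 < b) {s : Fin n → ℕ → ℕ} (hs : IsDigitMaps b n s)
    (t : Fin n → Fin b) :
    ∃ u : Fin n → Fin b, (∀ i, (u i.rev : ℕ) = s i (t i)) ∧ z2 b n s t = digitPoint u := by
  have hbR : (b : ℝ) ≠ 0 := by exact_mod_cast hb.ne'
  refine ⟨fun i => ⟨s i.rev (t i.rev), hs.lt _ (t _).is_lt⟩, fun i => by simp, ?_⟩
  rw [z2, digitPoint, finFunctionFinEquiv_apply, Nat.cast_sum, sum_div,
    ← Equiv.sum_comp Fin.revPerm]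
  refine sum_congr rfl fun i _ => ?_
  have hpow : (b : ℝ) ^ n = b ^ (n - (i + 1) + 1) * b ^ (i : ℕ) := by
    rw [← pow_add]
    congr 1
    omega
  simp only [Fin.revPerm_apply, Fin.val_rev, Nat.cast_mul, Nat.cast_pow]
  rw [hpow]
  field_simp

theorem eq_of_floor_pow_mul_z1_eq (hb : 0 < b) (hj : j ≤ n) {t t' : Fin n → Fin b}
    (h : ⌊(b : ℝ) ^ j * z1 b n t⌋₊ = ⌊(b : ℝ) ^ j * z1 b n t'⌋₊) {i : Fin n}
    (hi : n ≤ j + i) : t i = t' i := by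
  rw [z1_eq_digitPoint hb, z1_eq_digitPoint hb] at h
  exact eq_of_floor_pow_mul_digitPoint_eq hb hj h hi

theorem eq_of_floor_pow_mul_z2_eq (hb : 0 < b) {s : Fin n → ℕ → ℕ} (hs : IsDigitMaps b n s)
    (hj : j ≤ n) {t t' : Fin n → Fin b}
    (h : ⌊(b : ℝ) ^ j * z2 b n s t⌋₊ = ⌊(b : ℝ) ^ j * z2 b n s t'⌋₊) {i : Fin n}
    (hi : (i : ℕ) < j) : t i = t' i := by
  obtain ⟨u, hu, hz⟩ := exists_z2_eq_digitPoint hb hs t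
  obtain ⟨u', hu', hz'⟩ := exists_z2_eq_digitPoint hb hs t'
  rw [hz, hz'] at h
  have hrev := eq_of_floor_pow_mul_digitPoint_eq hb hj h (i := i.rev) (by rw [Fin.val_rev]; omega)
  rw [Fin.ext_iff, hu, hu'] at hrev
  exact Fin.ext (hs.injOn i (t i).is_lt (t' i).is_lt hrev)

theorem card_hammersley_cell_le (hb : 0 < b) {s : Fin n → ℕ → ℕ} (hs : IsDigitMaps b n s)
    {j₁ j₂ : ℕ} (hj₁ : j₁ ≤ n) (hj₂ : j₂ ≤ n) (hn : n ≤ j₁ + j₂ + 1) (m₁ m₂ : ℕ) :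
    #{t : Fin n → Fin b | ⌊(b : ℝ) ^ j₁ * z1 b n t⌋₊ = m₁ ∧ ⌊(b : ℝ) ^ j₂ * z2 b n s t⌋₊ = m₂}
      ≤ b := by
  let M : Finset (Fin n) := {i | j₂ ≤ (i : ℕ) ∧ (i : ℕ) + j₁ < n}
  have hM : #M ≤ 1 := card_le_one.2 fun i hi i' hi' => by
    simp only [M, mem_filter, mem_univ, true_and] at hi hi'
    omega
  refine (card_le_pow_card_of_eqOn_compl M fun t ht t' ht' i hi => ?_).trans ?_
  · simp only [mem_filter, mem_univ, true_and] at ht ht'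
    simp only [M, Set.mem_compl_iff, mem_coe, mem_filter, mem_univ, true_and, not_and_or,
      not_le, not_lt] at hi
    rcases hi with hi | hi
    · exact eq_of_floor_pow_mul_z2_eq hb hs hj₂ (ht.2.trans ht'.2.symm) hi
    · exact eq_of_floor_pow_mul_z1_eq hb hj₁ (ht.1.trans ht'.1.symm) (by omega)
  · simpa using Nat.pow_le_pow_right hb hM

theorem norm_sum_haarTail_mul_haarTail_le {b j₁ j₂ m₁ m₂ ℓ₁ ℓ₂ : ℕ} (hb : 0 < b)
    (hm₁ : m₁ < b ^ j₁) (hm₂ : m₂ < b ^ j₂) (hℓ₁ : 0 < ℓ₁) (hℓ₁b : ℓ₁ < b) (hℓ₂ : 0 < ℓ₂)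
    (hℓ₂b : ℓ₂ < b) {T : Type*} [Fintype T] {p q : T → ℝ} (hp : ∀ t, 0 ≤ p t)
    (hq : ∀ t, 0 ≤ q t) :
    ‖∑ t, haarTail b j₁ m₁ ℓ₁ (p t) * haarTail b j₂ m₂ ℓ₂ (q t)‖
      ≤ #{t | ⌊(b : ℝ) ^ j₁ * p t⌋₊ = m₁ ∧ ⌊(b : ℝ) ^ j₂ * q t⌋₊ = m₂}
          * (b : ℝ) ^ (-(j₁ : ℤ) - j₂) := by
  have hbR : (b : ℝ) ≠ 0 := by exact_mod_cast hb.ne'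
  have hcell : ∀ t ∈ univ, haarTail b j₁ m₁ ℓ₁ (p t) * haarTail b j₂ m₂ ℓ₂ (q t) ≠ 0 →
      ⌊(b : ℝ) ^ j₁ * p t⌋₊ = m₁ ∧ ⌊(b : ℝ) ^ j₂ * q t⌋₊ = m₂ := fun t _ h => by
    by_contra hcell
    rcases not_and_or.1 hcell with h₁ | h₂
    · exact h (by rw [haarTail_eq_zero_of_floor_ne hm₁ hℓ₁ hℓ₁b (hp t) h₁, zero_mul])
    · exact h (by rw [haarTail_eq_zero_of_floor_ne hm₂ hℓ₂ hℓ₂b (hq t) h₂, mul_zero])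
  rw [← sum_filter_of_ne hcell, ← nsmul_eq_mul, ← sum_const]
  refine (norm_sum_le _ _).trans (sum_le_sum fun t _ => ?_)
  rw [norm_mul, sub_eq_add_neg, zpow_add₀ hbR, zpow_neg, zpow_neg, zpow_natCast, zpow_natCast]
  exact mul_le_mul (norm_haarTail_le hb hm₁ _) (norm_haarTail_le hb hm₂ _) (norm_nonneg _)
    (by positivity)

theorem norm_haarMoment_mul_haarMoment {b j₁ j₂ m₁ m₂ ℓ₁ ℓ₂ : ℕ}
    (hm₁ : m₁ < b ^ j₁) (hm₂ : m₂ < b ^ j₂) (hℓ₁ : 0 < ℓ₁) (hℓ₁b : ℓ₁ < b) (hℓ₂ : 0 < ℓ₂)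
    (hℓ₂b : ℓ₂ < b) :
    ‖haarMoment b j₁ m₁ ℓ₁ * haarMoment b j₂ m₂ ℓ₂‖
      = (b : ℝ) ^ (-2 * (j₁ : ℤ) - 2 * (j₂ : ℤ) - 2) /
          (‖bexp b ℓ₁ 1 - 1‖ * ‖bexp b ℓ₂ 1 - 1‖) := by
  have hbR : (b : ℝ) ≠ 0 := by exact_mod_cast (by omega : b ≠ 0)
  rw [norm_mul, norm_haarMoment hm₁ hℓ₁ hℓ₁b, norm_haarMoment hm₂ hℓ₂ hℓ₂b, div_mul_div_comm,
    ← zpow_add₀ hbR]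
  ring_nf

section hammersleyCoefficient

variable {b n : ℕ} {s : Fin n → ℕ → ℕ} {j₁ j₂ m₁ m₂ ℓ₁ ℓ₂ : ℕ}

theorem z1_nonneg (t : Fin n → Fin b) : 0 ≤ z1 b n t :=
  sum_nonneg fun _ _ => by positivity

theorem z2_nonneg (s : Fin n → ℕ → ℕ) (t : Fin n → Fin b) : 0 ≤ z2 b n s t :=
  sum_nonneg fun _ _ => by positivity

theorem norm_mu_le (hb : 0 < b) (hs : IsDigitMaps b n s) (hj₁ : j₁ ≤ n) (hj₂ : j₂ ≤ n)
    (hn : n ≤ j₁ + j₂ + 1) (hm₁ : m₁ < b ^ j₁) (hm₂ : m₂ < b ^ j₂) (hℓ₁ : 0 < ℓ₁)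
    (hℓ₁b : ℓ₁ < b) (hℓ₂ : 0 < ℓ₂) (hℓ₂b : ℓ₂ < b) :
    ‖mu b n s j₁ j₂ m₁ m₂ ℓ₁ ℓ₂‖
      ≤ (b + ‖bexp b ℓ₁ 1 - 1‖⁻¹ * ‖bexp b ℓ₂ 1 - 1‖⁻¹) * (b : ℝ) ^ (-(n : ℤ) - j₁ - j₂) := by
  have hbR : (0 : ℝ) < b := by exact_mod_cast hb
  have hcell := card_hammersley_cell_le hb hs hj₁ hj₂ hn m₁ m₂
  have hexp : (b : ℝ) ^ (-(n : ℤ) - j₁ - j₂) = b ^ (-(n : ℤ)) * b ^ (-(j₁ : ℤ) - j₂) := by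
    rw [← zpow_add₀ hbR.ne']
    ring_nf
  rw [mu_eq_sum_haarTail_mul_sub_haarMoment_mul, add_mul]
  refine (norm_sub_le _ _).trans (add_le_add ?_ ?_)
  · rw [norm_mul, norm_zpow, Complex.norm_natCast, hexp, mul_left_comm]
    gcongr
    exact (norm_sum_haarTail_mul_haarTail_le hb hm₁ hm₂ hℓ₁ hℓ₁b hℓ₂ hℓ₂b z1_nonneg
      (z2_nonneg s)).trans (by gcongr)
  · rw [norm_haarMoment_mul_haarMoment hm₁ hm₂ hℓ₁ hℓ₁b hℓ₂ hℓ₂b, div_eq_mul_inv, mul_inv,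
      mul_comm]
    exact mul_le_mul_of_nonneg_left (zpow_le_zpow_right₀ (by exact_mod_cast hb) (by omega))
      (by positivity)

theorem mu_eq_neg_haarMoment_mul_haarMoment (hm₁ : m₁ < b ^ j₁)
    (hm₂ : m₂ < b ^ j₂) (hℓ₁ : 0 < ℓ₁) (hℓ₁b : ℓ₁ < b) (hℓ₂ : 0 < ℓ₂) (hℓ₂b : ℓ₂ < b)
    (hcell : ∀ t, (⌊(b : ℝ) ^ j₁ * z1 b n t⌋₊, ⌊(b : ℝ) ^ j₂ * z2 b n s t⌋₊) ≠ (m₁, m₂)) :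
    mu b n s j₁ j₂ m₁ m₂ ℓ₁ ℓ₂ = -(haarMoment b j₁ m₁ ℓ₁ * haarMoment b j₂ m₂ ℓ₂) := by
  rw [mu_eq_sum_haarTail_mul_sub_haarMoment_mul, sum_eq_zero fun t _ => ?_, mul_zero,
    zero_sub]
  by_cases h₁ : ⌊(b : ℝ) ^ j₁ * z1 b n t⌋₊ = m₁
  · rw [haarTail_eq_zero_of_floor_ne hm₂ hℓ₂ hℓ₂b (z2_nonneg s t)
      fun h₂ => hcell t (Prod.ext h₁ h₂), mul_zero]
  · rw [haarTail_eq_zero_of_floor_ne hm₁ hℓ₁ hℓ₁b (z1_nonneg t) h₁, zero_mul]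

end hammersleyCoefficient

/-- Proposition 5.1 (ii): for `n − 1 ≤ j₁ + j₂` and `j₁, j₂ ≤ n`, all Haar coefficients
of the discrepancy function satisfy `|μ| ≤ c·b^{−n−j₁−j₂}` (with `c` depending only on
`b`), and all but at most `bⁿ` of them (for fixed `j` and `ℓ`) have absolute value
exactly `b^{−2j₁−2j₂−2}/(|e(ℓ₁)−1||e(ℓ₂)−1|)`. -/
theorem abs_haar_coeff_disc_medium (b : ℕ) (hb : 2 ≤ b) :
    ∃ c : ℝ, 0 < c ∧
      ∀ n : ℕ, 1 ≤ n → ∀ s : Fin n → ℕ → ℕ, IsDigitMaps b n s →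
        ∀ j₁ j₂ : ℕ, n ≤ j₁ + j₂ + 1 → j₁ ≤ n → j₂ ≤ n →
          ∀ ℓ₁ ℓ₂ : ℕ, 1 ≤ ℓ₁ → ℓ₁ ≤ b - 1 → 1 ≤ ℓ₂ → ℓ₂ ≤ b - 1 →
            (∀ m₁ m₂ : ℕ, m₁ < b ^ j₁ → m₂ < b ^ j₂ →
                ‖mu b n s j₁ j₂ m₁ m₂ ℓ₁ ℓ₂‖
                  ≤ c * (b:ℝ) ^ (-(n:ℤ) - j₁ - j₂)) ∧
            (((Finset.range (b ^ j₁) ×ˢ Finset.range (b ^ j₂)).filter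
                (fun m : ℕ × ℕ =>
                  ‖mu b n s j₁ j₂ m.1 m.2 ℓ₁ ℓ₂‖
                    ≠ (b:ℝ) ^ (-2*(j₁:ℤ) - 2*(j₂:ℤ) - 2) /
                        (‖Complex.exp (2 * Real.pi * Complex.I * ℓ₁ / b) - 1‖ *
                         ‖Complex.exp (2 * Real.pi * Complex.I * ℓ₂ / b) - 1‖))).card
              ≤ b ^ n) := by
  have hb₀ : 0 < b := by omega
  set K := ∑ ℓ ∈ Icc 1 (b - 1), ‖bexp b ℓ 1 - 1‖⁻¹
  have hK : ∀ ℓ ∈ Icc 1 (b - 1), ‖bexp b ℓ 1 - 1‖⁻¹ ≤ K :=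
    fun ℓ => single_le_sum (f := fun ℓ => ‖bexp b ℓ 1 - 1‖⁻¹) fun _ _ => by positivity
  refine ⟨b + K ^ 2, by positivity, fun n _ s hs j₁ j₂ hn hj₁ hj₂ ℓ₁ ℓ₂ h₁ h₁' h₂ h₂' =>
    ⟨fun m₁ m₂ hm₁ hm₂ => ?_, ?_⟩⟩
  · refine (norm_mu_le hb₀ hs hj₁ hj₂ hn hm₁ hm₂ (by omega) (by omega) (by omega)
      (by omega)).trans ?_
    rw [sq]
    gcongr <;> exact hK _ (mem_Icc.2 ⟨by assumption, by assumption⟩)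
  · let cell : (Fin n → Fin b) → ℕ × ℕ := fun t =>
      (⌊(b : ℝ) ^ j₁ * z1 b n t⌋₊, ⌊(b : ℝ) ^ j₂ * z2 b n s t⌋₊)
    refine (card_le_card fun m hm => ?_).trans
      ((card_image_le (s := univ) (f := cell)).trans_eq (by simp))
    simp only [mem_filter, mem_product, mem_range] at hm
    by_contra hcell
    refine hm.2 ?_
    rw [mu_eq_neg_haarMoment_mul_haarMoment hm.1.1 hm.1.2 (by omega) (by omega) (by omega)
      (by omega) fun t ht => hcell (mem_image.2 ⟨t, mem_univ _, ht⟩), norm_neg,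
      norm_haarMoment_mul_haarMoment hm.1.1 hm.1.2 (by omega) (by omega) (by omega) (by omega)]
    simp [bexp]
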